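/- arXiv:2003.11260 — 10 statements merged into one kernel-verified Lean document; each statement's English description precedes it below -/
import Mathlib

section
/- Let w : ℝ → ℝ be smooth and let z₁, z₂ : ℝ → ℝ be smooth solutions of the Lie equation z''' + 4wz' + 2w'z = 0. Then the bracket [z₁, z₂] := z₁'·z₂ − z₁·z₂' is again a solution of the Lie equation z''' + 4wz' + 2w'z = 0; that is, the solution space L(w) of the Lie equation is closed under this bracket. -/
open scoped ContDiff


/-- The solution space of the Lie equation `z''' + 4wz' + 2w'z = 0` is closed under the bracket
`[z₁, z₂] = z₁'·z₂ − z₁·z₂'`. -/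
theorem lie_solutions_closed_under_bracket
    (w z₁ z₂ : ℝ → ℝ)
    (hw : ContDiff ℝ (⊤ : ℕ∞) w) (hz₁ : ContDiff ℝ (⊤ : ℕ∞) z₁) (hz₂ : ContDiff ℝ (⊤ : ℕ∞) z₂)
    (hLie₁ : ∀ x, deriv (deriv (deriv z₁)) x + 4 * w x * deriv z₁ x + 2 * deriv w x * z₁ x = 0)
    (hLie₂ : ∀ x, deriv (deriv (deriv z₂)) x + 4 * w x * deriv z₂ x + 2 * deriv w x * z₂ x = 0) :
    ∀ x, deriv (deriv (deriv (fun t => deriv z₁ t * z₂ t - z₁ t * deriv z₂ t))) x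
        + 4 * w x * deriv (fun t => deriv z₁ t * z₂ t - z₁ t * deriv z₂ t) x
        + 2 * deriv w x * (deriv z₁ x * z₂ x - z₁ x * deriv z₂ x) = 0 := by
  have D : ∀ f : ℝ → ℝ, ContDiff ℝ ∞ f → ContDiff ℝ ∞ (deriv f) :=
    fun f hf => (contDiff_infty_iff_deriv.mp hf).2
  have d : ∀ f : ℝ → ℝ, ContDiff ℝ ∞ f → Differentiable ℝ f :=
    fun f hf => hf.differentiable (by simp)
  have hz₁0 : ContDiff ℝ ∞ z₁ := hz₁.of_le (by simp)
  have hz₂0 : ContDiff ℝ ∞ z₂ := hz₂.of_le (by simp)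
  have hw0 : ContDiff ℝ ∞ w := hw.of_le (by simp)
  have hz₁1 := D _ hz₁0; have hz₁2 := D _ hz₁1
  have hz₂1 := D _ hz₂0; have hz₂2 := D _ hz₂1
  have dw := d _ hw0
  have dz₁ := d _ hz₁0; have dz₁1 := d _ hz₁1; have dz₁2 := d _ hz₁2
  have dz₂ := d _ hz₂0; have dz₂1 := d _ hz₂1; have dz₂2 := d _ hz₂2
  -- first derivative of the bracket
  have h1 : deriv (fun t => deriv z₁ t * z₂ t - z₁ t * deriv z₂ t)
      = fun t => deriv (deriv z₁) t * z₂ t - z₁ t * deriv (deriv z₂) t := by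
    funext t
    rw [deriv_fun_sub ((dz₁1 t).fun_mul (dz₂ t)) ((dz₁ t).fun_mul (dz₂1 t)),
        deriv_fun_mul (dz₁1 t) (dz₂ t), deriv_fun_mul (dz₁ t) (dz₂1 t)]
    ring
  -- second derivative of the bracket
  have h2 : deriv (deriv (fun t => deriv z₁ t * z₂ t - z₁ t * deriv z₂ t))
      = fun t => (deriv (deriv z₁) t * deriv z₂ t - deriv z₁ t * deriv (deriv z₂) t)
          - 4 * w t * (deriv z₁ t * z₂ t - z₁ t * deriv z₂ t) := by
    rw [h1]
    funext t
    rw [deriv_fun_sub ((dz₁2 t).fun_mul (dz₂ t)) ((dz₁ t).fun_mul (dz₂2 t)),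
        deriv_fun_mul (dz₁2 t) (dz₂ t), deriv_fun_mul (dz₁ t) (dz₂2 t)]
    linear_combination z₂ t * hLie₁ t - z₁ t * hLie₂ t
  intro x
  rw [h2, h1]
  have dB : DifferentiableAt ℝ (fun t => deriv z₁ t * z₂ t - z₁ t * deriv z₂ t) x :=
    ((dz₁1 x).mul (dz₂ x)).sub ((dz₁ x).mul (dz₂1 x))
  rw [deriv_fun_sub (((dz₁2 x).fun_mul (dz₂1 x)).fun_sub ((dz₁1 x).fun_mul (dz₂2 x)))
        (((differentiable_const (4:ℝ)).fun_mul dw |>.differentiableAt).fun_mul dB),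
      deriv_fun_sub ((dz₁2 x).fun_mul (dz₂1 x)) ((dz₁1 x).fun_mul (dz₂2 x)),
      deriv_fun_mul (dz₁2 x) (dz₂1 x), deriv_fun_mul (dz₁1 x) (dz₂2 x),
      deriv_fun_mul ((differentiable_const (4:ℝ)).fun_mul dw |>.differentiableAt) dB,
      deriv_const_mul 4 (dw x)]
  have hB : deriv (fun t => deriv z₁ t * z₂ t - z₁ t * deriv z₂ t) x
      = deriv (deriv z₁) x * z₂ x - z₁ x * deriv (deriv z₂) x := by rw [h1]
  rw [hB]
  linear_combination deriv z₂ x * hLie₁ x - deriv z₁ x * hLie₂ x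
end

section
/- Let w : ℝ → ℝ be smooth, let z : ℝ → ℝ be a smooth, nowhere-vanishing solution of the Lie equation z''' + 4wz' + 2w'z = 0, and let ĉ ∈ ℝ. Define ŵ := w + ĉ/z². Then z also satisfies the Lie equation for ŵ, i.e. z''' + 4ŵz' + 2ŵ'z = 0. In other words, every potential of the form w + ĉ/z² admits z as a symmetry. -/
/-- If `z` is a nowhere-vanishing smooth symmetry of a smooth potential `w`, then for every
constant `ĉ` the shifted potential `ŵ = w + ĉ/z²` also admits `z` as a symmetry, i.e. `z`
satisfies the Lie equation `z''' + 4ŵz' + 2ŵ'z = 0`. -/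
theorem shifted_potential_admits_symmetry
    (w z : ℝ → ℝ) (c : ℝ)
    (hw : ContDiff ℝ (⊤ : ℕ∞) w) (hz : ContDiff ℝ (⊤ : ℕ∞) z) (hz0 : ∀ x, z x ≠ 0)
    (hLie : ∀ x, deriv (deriv (deriv z)) x + 4 * w x * deriv z x + 2 * deriv w x * z x = 0) :
    ∀ x, deriv (deriv (deriv z)) x
        + 4 * (w x + c / z x ^ 2) * deriv z x
        + 2 * deriv (fun t => w t + c / z t ^ 2) x * z x = 0 := by
  intro x
  have hzd : HasDerivAt z (deriv z x) x := (hz.differentiable (by simp) x).hasDerivAt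
  have hwd : HasDerivAt w (deriv w x) x := (hw.differentiable (by simp) x).hasDerivAt
  have hz2 : HasDerivAt (fun t => z t ^ 2) (2 * z x ^ 1 * deriv z x) x := hzd.pow 2
  have hdiv : HasDerivAt (fun t => c / z t ^ 2)
      ((0 * z x ^ 2 - c * (2 * z x ^ 1 * deriv z x)) / (z x ^ 2) ^ 2) x :=
    (hasDerivAt_const x c).div hz2 (pow_ne_zero 2 (hz0 x))
  have hsum : deriv (fun t => w t + c / z t ^ 2) x = deriv w x + (0 * z x ^ 2 - c * (2 * z x ^ 1 * deriv z x)) / (z x ^ 2) ^ 2 := (hwd.add hdiv).deriv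
  rw [hsum]
  have h := hLie x
  have hzx := hz0 x
  have h3 : deriv (deriv (deriv z)) x = -(4 * w x * deriv z x + 2 * deriv w x * z x) := by
    linarith
  rw [h3]
  field_simp
  ring
end

section
/- Let w : ℝ → ℝ be smooth, let z : ℝ → ℝ be a smooth, nowhere-vanishing solution of the Lie equation z''' + 4wz' + 2w'z = 0 with constant c_w := w·z² − (z')²/4 + z·z''/2, and let y : ℝ → ℝ be a smooth solution of the Schrödinger equation y'' + w·y = 0. Then the function H := ( c_w·y² + (z·y' − (z'/2)·y)² ) / z is constant on ℝ, i.e. H is a first integral of the Schrödinger equation. -/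
/-- If `z` is a nowhere-vanishing smooth symmetry of a smooth potential `w` with constant
`c_w = w·z² − (z')²/4 + z·z''/2`, and `y` solves `y'' + w·y = 0`, then
`H = (c_w·y² + (z·y' − (z'/2)·y)²)/z` is constant: a first integral of the Schrödinger
equation. -/
theorem first_integral_of_schrodinger
    (w z y : ℝ → ℝ) (c_w : ℝ)
    (hw : ContDiff ℝ (⊤ : ℕ∞) w) (hz : ContDiff ℝ (⊤ : ℕ∞) z) (hy : ContDiff ℝ (⊤ : ℕ∞) y)
    (hz0 : ∀ x, z x ≠ 0)
    (hLie : ∀ x, deriv (deriv (deriv z)) x + 4 * w x * deriv z x + 2 * deriv w x * z x = 0)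
    (hcw : ∀ x, w x * z x ^ 2 - (deriv z x) ^ 2 / 4 + z x * deriv (deriv z) x / 2 = c_w)
    (hSch : ∀ x, deriv (deriv y) x + w x * y x = 0) :
    ∃ H₀ : ℝ, ∀ x,
      (c_w * y x ^ 2 + (z x * deriv y x - deriv z x / 2 * y x) ^ 2) / z x = H₀ := by
  set H : ℝ → ℝ := fun x =>
    (c_w * y x ^ 2 + (z x * deriv y x - deriv z x / 2 * y x) ^ 2) / z x with hH
  have hz' := (contDiff_infty_iff_deriv.mp (hz.of_le (by simp))).2
  have hy' := (contDiff_infty_iff_deriv.mp (hy.of_le (by simp))).2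
  have key : ∀ x : ℝ, HasDerivAt H 0 x := by
    intro x
    have Dz : HasDerivAt z (deriv z x) x := (hz.differentiable (by simp) x).hasDerivAt
    have Dz' : HasDerivAt (deriv z) (deriv (deriv z) x) x :=
      (hz'.differentiable (by simp) x).hasDerivAt
    have Dy : HasDerivAt y (deriv y x) x := (hy.differentiable (by simp) x).hasDerivAt
    have Dy' : HasDerivAt (deriv y) (deriv (deriv y) x) x :=
      (hy'.differentiable (by simp) x).hasDerivAt
    set a := z x
    set a' := deriv z x
    set a'' := deriv (deriv z) x
    set b := y x
    set b' := deriv y x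
    set b'' := deriv (deriv y) x
    have DN : HasDerivAt (fun t => c_w * y t ^ 2 + (z t * deriv y t - deriv z t / 2 * y t) ^ 2)
        (c_w * (2 * b * b') +
          2 * (a * b' - a' / 2 * b) * ((a' * b' + a * b'') - (a'' / 2 * b + a' / 2 * b'))) x := by
      have h1 : HasDerivAt (fun t => c_w * y t ^ 2) (c_w * (2 * b * b')) x := by
        simpa [mul_comm, pow_two] using ((Dy.pow 2).const_mul c_w)
      have h2 : HasDerivAt (fun t => z t * deriv y t - deriv z t / 2 * y t)
          ((a' * b' + a * b'') - (a'' / 2 * b + a' / 2 * b')) x := by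
        exact (Dz.mul Dy').sub ((Dz'.div_const 2).mul Dy)
      have h3 : HasDerivAt (fun t => (z t * deriv y t - deriv z t / 2 * y t) ^ 2)
          (2 * (a * b' - a' / 2 * b) * ((a' * b' + a * b'') - (a'' / 2 * b + a' / 2 * b'))) x := by
        refine (h2.pow 2).congr_deriv (Eq.symm ?_)
        push_cast
        ring
      exact h1.add h3
    have DH := DN.div Dz (hz0 x)
    have hS := hSch x
    have hC := hcw x
    refine DH.congr_deriv (Eq.symm ?_)
    rw [eq_comm, div_eq_zero_iff]
    left
    have hb'' : b'' + w x * b = 0 := hS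
    have hcc : w x * a ^ 2 - a' ^ 2 / 4 + a * a'' / 2 = c_w := hC
    linear_combination (2 * (a * b' - a' / 2 * b) * a ^ 2) * hb''
      - (2 * (a * b' - a' / 2 * b) * b) * hcc
  obtain ⟨H₀, hH₀⟩ : ∃ H₀, ∀ x, H x = H₀ := by
    refine ⟨H 0, fun x => ?_⟩
    exact is_const_of_deriv_eq_zero (fun t => (key t).differentiableAt)
      (fun t => (key t).deriv) x 0
  exact ⟨H₀, hH₀⟩
end

section
/- (Hyperbolic case.) Let z : ℝ → ℝ be smooth and everywhere positive, let q₀ > 0, and define the potential w := −q₀²/z² + (z')²/(4z²) − z''/(2z). Let F : ℝ → ℝ be a smooth function with F' = 1/z. Then both functions y⁽¹⁾ := √z · sinh(q₀·F) and y⁽²⁾ := √z · cosh(q₀·F) satisfy the Schrödinger equation y'' + w·y = 0, and z satisfies the Lie equation z''' + 4wz' + 2w'z = 0 for this w with c_w = −q₀² < 0. -/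
private lemma hyp_schrod_aux (z F w : ℝ → ℝ) (q₀ : ℝ)
    (hz : ContDiff ℝ (⊤ : ℕ∞) z) (hzpos : ∀ x, 0 < z x)
    (hF : ContDiff ℝ (⊤ : ℕ∞) F) (hF' : ∀ x, deriv F x = 1 / z x)
    (hw : ∀ x, w x = -q₀ ^ 2 / z x ^ 2 + (deriv z x) ^ 2 / (4 * z x ^ 2)
                    - deriv (deriv z) x / (2 * z x))
    (u v : ℝ → ℝ) (hu : ∀ t, HasDerivAt u (v t) t) (hv : ∀ t, HasDerivAt v (u t) t)
    (x : ℝ) :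
    deriv (deriv (fun t => Real.sqrt (z t) * u (q₀ * F t))) x
      + w x * (Real.sqrt (z x) * u (q₀ * F x)) = 0 := by
  have hne : ∀ t, z t ≠ 0 := fun t => (hzpos t).ne'
  have hsne : ∀ t, Real.sqrt (z t) ≠ 0 := fun t => (Real.sqrt_pos.mpr (hzpos t)).ne'
  have dz : Differentiable ℝ z := hz.differentiable (by simp)
  have hzt : ContDiff ℝ ((⊤ : ℕ∞) : WithTop ℕ∞) z := hz.of_le (by simp)
  have dz1 : Differentiable ℝ (deriv z) :=
    ((contDiff_infty_iff_deriv.mp hzt).2).differentiable (by simp)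
  have dF : Differentiable ℝ F := hF.differentiable (by simp)
  have hs : ∀ t, HasDerivAt (fun r => Real.sqrt (z r))
      (deriv z t / (2 * Real.sqrt (z t))) t := by
    intro t
    have h := (Real.hasDerivAt_sqrt (hne t)).comp t (dz t).hasDerivAt
    refine h.congr_deriv ?_
    field_simp
  have hU : ∀ t, HasDerivAt (fun r => u (q₀ * F r)) (q₀ / z t * v (q₀ * F t)) t := by
    intro t
    have h1 : HasDerivAt (fun r => q₀ * F r) (q₀ * (1 / z t)) t := by
      have := ((dF t).hasDerivAt).const_mul q₀
      rwa [hF' t] at this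
    have h := (hu (q₀ * F t)).comp t h1
    refine h.congr_deriv ?_
    ring
  have hV : ∀ t, HasDerivAt (fun r => v (q₀ * F r)) (q₀ / z t * u (q₀ * F t)) t := by
    intro t
    have h1 : HasDerivAt (fun r => q₀ * F r) (q₀ * (1 / z t)) t := by
      have := ((dF t).hasDerivAt).const_mul q₀
      rwa [hF' t] at this
    have h := (hv (q₀ * F t)).comp t h1
    refine h.congr_deriv ?_
    ring
  have hy : ∀ t, HasDerivAt (fun r => Real.sqrt (z r) * u (q₀ * F r))
      (deriv z t / (2 * Real.sqrt (z t)) * u (q₀ * F t)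
        + Real.sqrt (z t) * (q₀ / z t * v (q₀ * F t))) t :=
    fun t => (hs t).mul (hU t)
  have hd1 : deriv (fun r => Real.sqrt (z r) * u (q₀ * F r))
      = fun t => deriv z t / (2 * Real.sqrt (z t)) * u (q₀ * F t)
        + Real.sqrt (z t) * (q₀ / z t * v (q₀ * F t)) :=
    funext fun t => (hy t).deriv
  rw [hd1]
  have hA : HasDerivAt (fun t => deriv z t / (2 * Real.sqrt (z t)))
      ((deriv (deriv z) x * (2 * Real.sqrt (z x))
        - deriv z x * (2 * (deriv z x / (2 * Real.sqrt (z x)))))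
        / (2 * Real.sqrt (z x)) ^ 2) x :=
    (dz1 x).hasDerivAt.div ((hs x).const_mul 2) (by
      simp [hsne x])
  have hB : HasDerivAt (fun t => q₀ / z t)
      ((0 * z x - q₀ * deriv z x) / z x ^ 2) x :=
    (hasDerivAt_const x q₀).div (dz x).hasDerivAt (hne x)
  have h2 := (hA.mul (hU x)).add ((hs x).mul (hB.mul (hV x)))
  rw [(show HasDerivAt (fun t => deriv z t / (2 * Real.sqrt (z t)) * u (q₀ * F t) + Real.sqrt (z t) * (q₀ / z t * v (q₀ * F t))) _ x from h2).deriv, hw x]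
  simp only [Pi.mul_apply]
  have hsq : Real.sqrt (z x) ^ 2 = z x := Real.sq_sqrt (hzpos x).le
  set s := Real.sqrt (z x) with hsdef
  rw [← hsq]
  have hs0 : s ≠ 0 := hsne x
  field_simp
  ring

/-- Hyperbolic case: for a positive smooth `z`, `q₀ > 0`, the potential
`w = −q₀²/z² + (z')²/(4z²) − z''/(2z)`, and `F` with `F' = 1/z`, the functions
`√z·sinh(q₀F)` and `√z·cosh(q₀F)` solve `y'' + w·y = 0`, while `z` solves the Lie equation
for `w` with `c_w = w·z² − (z')²/4 + z·z''/2 = −q₀² < 0`. -/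
theorem hyperbolic_fundamental_solutions
    (z F w : ℝ → ℝ) (q₀ : ℝ) (hq₀ : 0 < q₀)
    (hz : ContDiff ℝ (⊤ : ℕ∞) z) (hzpos : ∀ x, 0 < z x)
    (hF : ContDiff ℝ (⊤ : ℕ∞) F) (hF' : ∀ x, deriv F x = 1 / z x)
    (hw : ∀ x, w x = -q₀ ^ 2 / z x ^ 2 + (deriv z x) ^ 2 / (4 * z x ^ 2)
                    - deriv (deriv z) x / (2 * z x)) :
    (∀ x, deriv (deriv (fun t => Real.sqrt (z t) * Real.sinh (q₀ * F t))) x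
        + w x * (Real.sqrt (z x) * Real.sinh (q₀ * F x)) = 0) ∧
    (∀ x, deriv (deriv (fun t => Real.sqrt (z t) * Real.cosh (q₀ * F t))) x
        + w x * (Real.sqrt (z x) * Real.cosh (q₀ * F x)) = 0) ∧
    (∀ x, deriv (deriv (deriv z)) x + 4 * w x * deriv z x + 2 * deriv w x * z x = 0) ∧
    (∀ x, w x * z x ^ 2 - (deriv z x) ^ 2 / 4 + z x * deriv (deriv z) x / 2 = -q₀ ^ 2) := by
  have hne : ∀ t, z t ≠ 0 := fun t => (hzpos t).ne'
  have dz : Differentiable ℝ z := hz.differentiable (by simp)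
  have hzt : ContDiff ℝ ((⊤ : ℕ∞) : WithTop ℕ∞) z := hz.of_le (by simp)
  have hzt1 : ContDiff ℝ ((⊤ : ℕ∞) : WithTop ℕ∞) (deriv z) :=
    (contDiff_infty_iff_deriv.mp hzt).2
  have dz1 : Differentiable ℝ (deriv z) := hzt1.differentiable (by simp)
  have hzt2 : ContDiff ℝ ((⊤ : ℕ∞) : WithTop ℕ∞) (deriv (deriv z)) :=
    (contDiff_infty_iff_deriv.mp hzt1).2
  have dz2 : Differentiable ℝ (deriv (deriv z)) := hzt2.differentiable (by simp)
  refine ⟨hyp_schrod_aux z F w q₀ hz hzpos hF hF' hw Real.sinh Real.cosh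
      (fun t => Real.hasDerivAt_sinh t) (fun t => Real.hasDerivAt_cosh t),
    hyp_schrod_aux z F w q₀ hz hzpos hF hF' hw Real.cosh Real.sinh
      (fun t => Real.hasDerivAt_cosh t) (fun t => Real.hasDerivAt_sinh t),
    ?_, ?_⟩
  · intro x
    have hwfun : w = fun t => -q₀ ^ 2 / z t ^ 2 + (deriv z t) ^ 2 / (4 * z t ^ 2)
        - deriv (deriv z) t / (2 * z t) := funext hw
    have hA : HasDerivAt (fun t => -q₀ ^ 2 / z t ^ 2)
        ((0 * z x ^ 2 - -q₀ ^ 2 * (2 * z x ^ 1 * deriv z x)) / (z x ^ 2) ^ 2) x :=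
      (hasDerivAt_const x (-q₀ ^ 2)).div ((dz x).hasDerivAt.pow 2)
        (pow_ne_zero 2 (hne x))
    have hB : HasDerivAt (fun t => (deriv z t) ^ 2 / (4 * z t ^ 2))
        ((2 * deriv z x ^ 1 * deriv (deriv z) x * (4 * z x ^ 2)
          - deriv z x ^ 2 * (4 * (2 * z x ^ 1 * deriv z x))) / (4 * z x ^ 2) ^ 2) x :=
      ((dz1 x).hasDerivAt.pow 2).div (((dz x).hasDerivAt.pow 2).const_mul 4)
        (by simp [pow_ne_zero 2 (hne x)])
    have hC : HasDerivAt (fun t => deriv (deriv z) t / (2 * z t))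
        ((deriv (deriv (deriv z)) x * (2 * z x)
          - deriv (deriv z) x * (2 * deriv z x)) / (2 * z x) ^ 2) x :=
      (dz2 x).hasDerivAt.div ((dz x).hasDerivAt.const_mul 2) (by simp [hne x])
    have hw' : HasDerivAt w ((0 * z x ^ 2 - -q₀ ^ 2 * (2 * z x ^ 1 * deriv z x)) / (z x ^ 2) ^ 2
        + (2 * deriv z x ^ 1 * deriv (deriv z) x * (4 * z x ^ 2)
          - deriv z x ^ 2 * (4 * (2 * z x ^ 1 * deriv z x))) / (4 * z x ^ 2) ^ 2
        - (deriv (deriv (deriv z)) x * (2 * z x)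
          - deriv (deriv z) x * (2 * deriv z x)) / (2 * z x) ^ 2) x := by
      rw [hwfun]; exact (hA.add hB).sub hC
    rw [hw'.deriv, hw x]
    field_simp [hne x]
    ring
  · intro x
    have h1 : z x ≠ 0 := hne x
    rw [hw x]
    field_simp
    ring
end

section
/- (Parabolic case.) Let z : ℝ → ℝ be smooth and everywhere positive, and define the potential w := (z')²/(4z²) − z''/(2z). Let F : ℝ → ℝ be a smooth function with F' = 1/z. Then both functions y⁽¹⁾ := √z · F and y⁽²⁾ := √z satisfy the Schrödinger equation y'' + w·y = 0, and z satisfies the Lie equation z''' + 4wz' + 2w'z = 0 for this w with c_w = 0. -/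
/-- Parabolic case: for a positive smooth `z`, the potential `w = (z')²/(4z²) − z''/(2z)`,
and `F` with `F' = 1/z`, the functions `√z·F` and `√z` solve `y'' + w·y = 0`, while `z`
solves the Lie equation for `w` with `c_w = w·z² − (z')²/4 + z·z''/2 = 0`. -/
theorem parabolic_fundamental_solutions
    (z F w : ℝ → ℝ)
    (hz : ContDiff ℝ (⊤ : ℕ∞) z) (hzpos : ∀ x, 0 < z x)
    (hF : ContDiff ℝ (⊤ : ℕ∞) F) (hF' : ∀ x, deriv F x = 1 / z x)
    (hw : ∀ x, w x = (deriv z x) ^ 2 / (4 * z x ^ 2) - deriv (deriv z) x / (2 * z x)) :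
    (∀ x, deriv (deriv (fun t => Real.sqrt (z t) * F t)) x
        + w x * (Real.sqrt (z x) * F x) = 0) ∧
    (∀ x, deriv (deriv (fun t => Real.sqrt (z t))) x
        + w x * Real.sqrt (z x) = 0) ∧
    (∀ x, deriv (deriv (deriv z)) x + 4 * w x * deriv z x + 2 * deriv w x * z x = 0) ∧
    (∀ x, w x * z x ^ 2 - (deriv z x) ^ 2 / 4 + z x * deriv (deriv z) x / 2 = 0) := by
  have hzi : ContDiff ℝ (⊤ : ℕ∞) z := hz.of_le (by simp)
  have hzd : Differentiable ℝ z := hzi.differentiable (by simp)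
  have hz1 : ContDiff ℝ (⊤ : ℕ∞) (deriv z) := (contDiff_infty_iff_deriv.mp hzi).2
  have hz1d : Differentiable ℝ (deriv z) := hz1.differentiable (by simp)
  have hz2 : ContDiff ℝ (⊤ : ℕ∞) (deriv (deriv z)) := (contDiff_infty_iff_deriv.mp hz1).2
  have hz2d : Differentiable ℝ (deriv (deriv z)) := hz2.differentiable (by simp)
  have hFd : Differentiable ℝ F := hF.differentiable (by simp)
  have hspos : ∀ x, 0 < Real.sqrt (z x) := fun x => Real.sqrt_pos.mpr (hzpos x)
  have hsq : ∀ x, Real.sqrt (z x) ^ 2 = z x := fun x => Real.sq_sqrt (hzpos x).le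
  -- derivative of sqrt ∘ z
  have hs : ∀ x, HasDerivAt (fun t => Real.sqrt (z t))
      (deriv z x / (2 * Real.sqrt (z x))) x := by
    intro x
    have h := (Real.hasDerivAt_sqrt (hzpos x).ne').comp x (hzd x).hasDerivAt
    rw [show deriv z x / (2 * Real.sqrt (z x)) = 1 / (2 * Real.sqrt (z x)) * deriv z x by ring]
    exact h
  have hsderiv : deriv (fun t => Real.sqrt (z t))
      = fun x => deriv z x / (2 * Real.sqrt (z x)) := funext fun x => (hs x).deriv
  -- second derivative of sqrt ∘ z
  have hs2 : ∀ x, HasDerivAt (deriv (fun t => Real.sqrt (z t)))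
      ((deriv (deriv z) x * (2 * Real.sqrt (z x))
        - deriv z x * (2 * (deriv z x / (2 * Real.sqrt (z x)))))
        / (2 * Real.sqrt (z x)) ^ 2) x := by
    intro x
    rw [hsderiv]
    exact (hz1d x).hasDerivAt.div ((hs x).const_mul 2) ((mul_pos two_pos (hspos x)).ne')
  -- derivative of 1/z
  have hinv : ∀ x, HasDerivAt (fun t => 1 / z t) (-deriv z x / z x ^ 2) x := by
    intro x
    have h := ((hzd x).hasDerivAt.inv (hzpos x).ne'); simp only [one_div]; exact h
  -- derivative of sqrt z * F
  have hy1 : ∀ x, HasDerivAt (fun t => Real.sqrt (z t) * F t)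
      (deriv z x / (2 * Real.sqrt (z x)) * F x + Real.sqrt (z x) * (1 / z x)) x := by
    intro x
    have h := (hs x).mul (hFd x).hasDerivAt
    rw [hF' x] at h
    exact h
  have hy1deriv : deriv (fun t => Real.sqrt (z t) * F t)
      = fun x => deriv z x / (2 * Real.sqrt (z x)) * F x + Real.sqrt (z x) * (1 / z x) :=
    funext fun x => (hy1 x).deriv
  -- second derivative of sqrt z * F
  have hy2 : ∀ x, HasDerivAt (deriv (fun t => Real.sqrt (z t) * F t))
      (((deriv (deriv z) x * (2 * Real.sqrt (z x))
          - deriv z x * (2 * (deriv z x / (2 * Real.sqrt (z x)))))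
          / (2 * Real.sqrt (z x)) ^ 2 * F x
        + deriv z x / (2 * Real.sqrt (z x)) * (1 / z x))
        + (deriv z x / (2 * Real.sqrt (z x)) * (1 / z x)
          + Real.sqrt (z x) * (-deriv z x / z x ^ 2))) x := by
    intro x
    rw [hy1deriv]
    have h1 : HasDerivAt (fun x => deriv z x / (2 * Real.sqrt (z x)))
        ((deriv (deriv z) x * (2 * Real.sqrt (z x))
          - deriv z x * (2 * (deriv z x / (2 * Real.sqrt (z x)))))
          / (2 * Real.sqrt (z x)) ^ 2) x :=
      (hz1d x).hasDerivAt.div ((hs x).const_mul 2) ((mul_pos two_pos (hspos x)).ne')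
    have hF1 : HasDerivAt F (1 / z x) x := by
      have := (hFd x).hasDerivAt; rwa [hF' x] at this
    exact ((h1.mul hF1).add ((hs x).mul (hinv x)))
  -- w as a function
  have hwfun : w = fun x => (deriv z x) ^ 2 / (4 * z x ^ 2)
      - deriv (deriv z) x / (2 * z x) := funext hw
  have hw' : ∀ x, HasDerivAt w
      ((2 * deriv z x ^ 1 * deriv (deriv z) x * (4 * z x ^ 2)
        - deriv z x ^ 2 * (4 * (2 * z x ^ 1 * deriv z x))) / (4 * z x ^ 2) ^ 2
      - (deriv (deriv (deriv z)) x * (2 * z x)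
        - deriv (deriv z) x * (2 * deriv z x)) / (2 * z x) ^ 2) x := by
    intro x
    rw [hwfun]
    have h1 : HasDerivAt (fun x => (deriv z x) ^ 2 / (4 * z x ^ 2))
        ((2 * deriv z x ^ 1 * deriv (deriv z) x * (4 * z x ^ 2)
          - deriv z x ^ 2 * (4 * (2 * z x ^ 1 * deriv z x))) / (4 * z x ^ 2) ^ 2) x :=
      (((hz1d x).hasDerivAt.pow 2).div (((hzd x).hasDerivAt.pow 2).const_mul 4)
        (by have := hzpos x; positivity))
    have h2 : HasDerivAt (fun x => deriv (deriv z) x / (2 * z x))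
        ((deriv (deriv (deriv z)) x * (2 * z x)
          - deriv (deriv z) x * (2 * deriv z x)) / (2 * z x) ^ 2) x :=
      ((hz2d x).hasDerivAt.div ((hzd x).hasDerivAt.const_mul 2)
        (by have := hzpos x; positivity))
    exact h1.sub h2
  refine ⟨?_, ?_, ?_, ?_⟩
  · intro x
    rw [(hy2 x).deriv, hw x]
    have sp := (hspos x).ne'
    have zp := (hzpos x).ne'
    have hzx : z x = Real.sqrt (z x) ^ 2 := (hsq x).symm
    rw [hzx]
    field_simp
    rw [Real.sqrt_sq (hspos x).le]
    ring
  · intro x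
    rw [(hs2 x).deriv, hw x]
    have sp := (hspos x).ne'
    have hzx : z x = Real.sqrt (z x) ^ 2 := (hsq x).symm
    rw [hzx]
    field_simp
    rw [Real.sqrt_sq (hspos x).le]
    ring
  · intro x
    rw [(hw' x).deriv, hw x]
    have zp := (hzpos x).ne'
    field_simp
    ring
  · intro x
    rw [hw x]
    have zp := (hzpos x).ne'
    field_simp
    ring
end

section
/- Let z : ℝ → ℝ be smooth and everywhere positive, let q₀ > 0, define the potential w := q₀²/z² + (z')²/(4z²) − z''/(2z), and let F : ℝ → ℝ be smooth with F' = 1/z. Then the three functions z⁽¹⁾ := z, z⁽²⁾ := z · sin(2q₀·F), and z⁽³⁾ := z · cos(2q₀·F) all satisfy the Lie equation z''' + 4wz' + 2w'z = 0 for this potential w; i.e. they form a fundamental system of solutions of the (third-order, linear) Lie equation in the elliptic case c_w = q₀² > 0. -/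
open Real
open scoped ContDiff

/-- Derivative of the potential `w` as a `HasDerivAt` fact. -/
private lemma lie_w_hasDerivAt (z : ℝ → ℝ) (q₀ : ℝ)
    (hz : ContDiff ℝ (⊤ : ℕ∞) z) (hzpos : ∀ x, 0 < z x) (x : ℝ) :
    HasDerivAt (fun t => q₀ ^ 2 / z t ^ 2 + (deriv z t) ^ 2 / (4 * z t ^ 2)
        - deriv (deriv z) t / (2 * z t))
      ((0 * z x ^ 2 - q₀ ^ 2 * (2 * z x ^ 1 * deriv z x)) / (z x ^ 2) ^ 2
        + ((2 * deriv z x ^ 1 * deriv (deriv z) x) * (4 * z x ^ 2)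
            - deriv z x ^ 2 * (0 * z x ^ 2 + 4 * (2 * z x ^ 1 * deriv z x))) / (4 * z x ^ 2) ^ 2
        - (deriv (deriv (deriv z)) x * (2 * z x)
            - deriv (deriv z) x * (0 * z x + 2 * deriv z x)) / (2 * z x) ^ 2) x := by
  have hz' : ContDiff ℝ ∞ z := hz.of_le (by simp)
  have hz1 : ContDiff ℝ ∞ (deriv z) := (contDiff_infty_iff_deriv.mp hz').2
  have hz2 : ContDiff ℝ ∞ (deriv (deriv z)) := (contDiff_infty_iff_deriv.mp hz1).2
  have hzx : HasDerivAt z (deriv z x) x := (hz'.differentiable (by norm_num) x).hasDerivAt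
  have hz1x : HasDerivAt (deriv z) (deriv (deriv z) x) x :=
    (hz1.differentiable (by norm_num) x).hasDerivAt
  have hz2x : HasDerivAt (deriv (deriv z)) (deriv (deriv (deriv z)) x) x :=
    (hz2.differentiable (by norm_num) x).hasDerivAt
  have hzne : z x ≠ 0 := (hzpos x).ne'
  exact (((hasDerivAt_const x (q₀ ^ 2)).div (hzx.pow 2) (pow_ne_zero 2 hzne)).add
      ((hz1x.pow 2).div ((hasDerivAt_const x (4:ℝ)).mul (hzx.pow 2))
        (mul_ne_zero (by norm_num) (pow_ne_zero 2 hzne)))).sub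
    (hz2x.div ((hasDerivAt_const x (2:ℝ)).mul hzx) (mul_ne_zero (by norm_num) hzne))

/-- The value of `deriv w`. -/
private lemma lie_deriv_w (z w : ℝ → ℝ) (q₀ : ℝ)
    (hz : ContDiff ℝ (⊤ : ℕ∞) z) (hzpos : ∀ x, 0 < z x)
    (hw : ∀ x, w x = q₀ ^ 2 / z x ^ 2 + (deriv z x) ^ 2 / (4 * z x ^ 2)
                    - deriv (deriv z) x / (2 * z x)) (x : ℝ) :
    deriv w x =
      (0 * z x ^ 2 - q₀ ^ 2 * (2 * z x ^ 1 * deriv z x)) / (z x ^ 2) ^ 2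
        + ((2 * deriv z x ^ 1 * deriv (deriv z) x) * (4 * z x ^ 2)
            - deriv z x ^ 2 * (0 * z x ^ 2 + 4 * (2 * z x ^ 1 * deriv z x))) / (4 * z x ^ 2) ^ 2
        - (deriv (deriv (deriv z)) x * (2 * z x)
            - deriv (deriv z) x * (0 * z x + 2 * deriv z x)) / (2 * z x) ^ 2 := by
  rw [funext hw]
  exact (lie_w_hasDerivAt z q₀ hz hzpos x).deriv

private lemma lie_aux (z F w S C : ℝ → ℝ) (q₀ : ℝ)
    (hz : ContDiff ℝ (⊤ : ℕ∞) z) (hzpos : ∀ x, 0 < z x)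
    (hF : ContDiff ℝ (⊤ : ℕ∞) F) (hF' : ∀ x, deriv F x = 1 / z x)
    (hS : ∀ y, HasDerivAt S (C y) y) (hC : ∀ y, HasDerivAt C (-S y) y)
    (hw : ∀ x, w x = q₀ ^ 2 / z x ^ 2 + (deriv z x) ^ 2 / (4 * z x ^ 2)
                    - deriv (deriv z) x / (2 * z x)) :
    ∀ x, deriv (deriv (deriv (fun t => z t * S (2 * q₀ * F t)))) x
        + 4 * w x * deriv (fun t => z t * S (2 * q₀ * F t)) x
        + 2 * deriv w x * (z x * S (2 * q₀ * F x)) = 0 := by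
  have hz' : ContDiff ℝ ∞ z := hz.of_le (by simp)
  have hz1 : ContDiff ℝ ∞ (deriv z) := (contDiff_infty_iff_deriv.mp hz').2
  have hz2 : ContDiff ℝ ∞ (deriv (deriv z)) := (contDiff_infty_iff_deriv.mp hz1).2
  have hF2 : ContDiff ℝ ∞ F := hF.of_le (by simp)
  have hzx : ∀ x, HasDerivAt z (deriv z x) x :=
    fun x => (hz'.differentiable (by norm_num) x).hasDerivAt
  have hz1x : ∀ x, HasDerivAt (deriv z) (deriv (deriv z) x) x :=
    fun x => (hz1.differentiable (by norm_num) x).hasDerivAt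
  have hz2x : ∀ x, HasDerivAt (deriv (deriv z)) (deriv (deriv (deriv z)) x) x :=
    fun x => (hz2.differentiable (by norm_num) x).hasDerivAt
  have hFx : ∀ x, HasDerivAt F (1 / z x) x :=
    fun x => hF' x ▸ (hF2.differentiable (by norm_num) x).hasDerivAt
  have hθ : ∀ x, HasDerivAt (fun t => 2 * q₀ * F t) (2 * q₀ * (1 / z x)) x :=
    fun x => (hFx x).const_mul _
  have hSθ : ∀ x, HasDerivAt (fun t => S (2 * q₀ * F t))
      (C (2 * q₀ * F x) * (2 * q₀ * (1 / z x))) x := fun x => (hS _).comp x (hθ x)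
  have hCθ : ∀ x, HasDerivAt (fun t => C (2 * q₀ * F t))
      (-S (2 * q₀ * F x) * (2 * q₀ * (1 / z x))) x := fun x => (hC _).comp x (hθ x)
  have hzne : ∀ x, z x ≠ 0 := fun x => (hzpos x).ne'
  have hd1 : deriv (fun t => z t * S (2 * q₀ * F t))
      = fun x => deriv z x * S (2 * q₀ * F x) + 2 * q₀ * C (2 * q₀ * F x) := by
    funext x
    have e : deriv (fun t => z t * S (2 * q₀ * F t)) x
        = deriv z x * S (2 * q₀ * F x)
          + z x * (C (2 * q₀ * F x) * (2 * q₀ * (1 / z x))) := ((hzx x).mul (hSθ x)).deriv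
    have h0 := hzne x
    rw [e]; field_simp
  have hd2 : deriv (fun x => deriv z x * S (2 * q₀ * F x) + 2 * q₀ * C (2 * q₀ * F x))
      = fun x => deriv (deriv z) x * S (2 * q₀ * F x)
          + 2 * q₀ * deriv z x * C (2 * q₀ * F x) / z x
          - 4 * q₀ ^ 2 * S (2 * q₀ * F x) / z x := by
    funext x
    have e : deriv (fun x => deriv z x * S (2 * q₀ * F x) + 2 * q₀ * C (2 * q₀ * F x)) x
        = (deriv (deriv z) x * S (2 * q₀ * F x)
            + deriv z x * (C (2 * q₀ * F x) * (2 * q₀ * (1 / z x))))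
          + 2 * q₀ * (-S (2 * q₀ * F x) * (2 * q₀ * (1 / z x))) :=
      (((hz1x x).mul (hSθ x)).add ((hCθ x).const_mul (2 * q₀))).deriv
    have h0 := hzne x
    rw [e]; field_simp; ring
  intro x
  have e3 : deriv (fun x => deriv (deriv z) x * S (2 * q₀ * F x)
          + 2 * q₀ * deriv z x * C (2 * q₀ * F x) / z x
          - 4 * q₀ ^ 2 * S (2 * q₀ * F x) / z x) x
      = (deriv (deriv (deriv z)) x * S (2 * q₀ * F x)
            + deriv (deriv z) x * (C (2 * q₀ * F x) * (2 * q₀ * (1 / z x)))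
          + ((2 * q₀ * deriv (deriv z) x * C (2 * q₀ * F x)
              + 2 * q₀ * deriv z x * (-S (2 * q₀ * F x) * (2 * q₀ * (1 / z x)))) * z x
             - 2 * q₀ * deriv z x * C (2 * q₀ * F x) * deriv z x) / z x ^ 2)
        - ((4 * q₀ ^ 2 * (C (2 * q₀ * F x) * (2 * q₀ * (1 / z x)))) * z x
             - 4 * q₀ ^ 2 * S (2 * q₀ * F x) * deriv z x) / z x ^ 2 :=
    ((((hz2x x).mul (hSθ x)).add
        ((((hz1x x).const_mul (2 * q₀)).mul (hCθ x)).div (hzx x) (hzne x))).sub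
      (((hSθ x).const_mul (4 * q₀ ^ 2)).div (hzx x) (hzne x))).deriv
  rw [hd1, hd2, e3, hw x, lie_deriv_w z w q₀ hz hzpos hw x]
  have h0 := hzne x
  field_simp
  ring

/-- Elliptic case, fundamental solutions of the Lie equation: for a positive smooth `z`,
`q₀ > 0`, the potential `w = q₀²/z² + (z')²/(4z²) − z''/(2z)`, and `F` with `F' = 1/z`,
the three functions `z`, `z·sin(2q₀F)` and `z·cos(2q₀F)` all satisfy the Lie equation
`z''' + 4wz' + 2w'z = 0` for this potential. -/
theorem elliptic_lie_fundamental_solutions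
    (z F w : ℝ → ℝ) (q₀ : ℝ) (hq₀ : 0 < q₀)
    (hz : ContDiff ℝ (⊤ : ℕ∞) z) (hzpos : ∀ x, 0 < z x)
    (hF : ContDiff ℝ (⊤ : ℕ∞) F) (hF' : ∀ x, deriv F x = 1 / z x)
    (hw : ∀ x, w x = q₀ ^ 2 / z x ^ 2 + (deriv z x) ^ 2 / (4 * z x ^ 2)
                    - deriv (deriv z) x / (2 * z x)) :
    (∀ x, deriv (deriv (deriv z)) x + 4 * w x * deriv z x + 2 * deriv w x * z x = 0) ∧
    (∀ x, deriv (deriv (deriv (fun t => z t * Real.sin (2 * q₀ * F t)))) x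
        + 4 * w x * deriv (fun t => z t * Real.sin (2 * q₀ * F t)) x
        + 2 * deriv w x * (z x * Real.sin (2 * q₀ * F x)) = 0) ∧
    (∀ x, deriv (deriv (deriv (fun t => z t * Real.cos (2 * q₀ * F t)))) x
        + 4 * w x * deriv (fun t => z t * Real.cos (2 * q₀ * F t)) x
        + 2 * deriv w x * (z x * Real.cos (2 * q₀ * F x)) = 0) := by
  refine ⟨?_, ?_, ?_⟩
  · intro x
    rw [hw x, lie_deriv_w z w q₀ hz hzpos hw x]
    have h0 : z x ≠ 0 := (hzpos x).ne'
    field_simp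
    ring
  · exact lie_aux z F w Real.sin Real.cos q₀ hz hzpos hF hF'
      (fun y => Real.hasDerivAt_sin y) (fun y => Real.hasDerivAt_cos y) hw
  · exact lie_aux z F w Real.cos (fun y => -Real.sin y) q₀ hz hzpos hF hF'
      (fun y => Real.hasDerivAt_cos y) (fun y => by exact (Real.hasDerivAt_sin y).neg) hw
end

section
/- Let g₂, g₃, c₀, c₁ ∈ ℝ, let n ≥ 1 be a natural number, let A ∈ ℝ[X] be a monic polynomial of degree n, and set C := c₁·X + c₀. If the even-case Lamé symmetry identity (4X³ − g₂X − g₃)·A''' + (18X² − (3/2)g₂)·A'' + 4(3X + C)·A' + 2A·C' = 0 holds in ℝ[X], then c₁ = −n(n+1). -/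
/-!
Compare the coefficients of `Xⁿ`. Each summand has the shape `Pₖ · A⁽ᵏ⁾` with `deg Pₖ ≤ k`, so it
contributes `Pₖ.coeff k · n(n-1)⋯(n-k+1)` there; the resulting linear equation in `c₁` factors as
`(2n + 1)(c₁ + n(n+1)) = 0`.
-/

open Polynomial

theorem Polynomial.coeff_mul_iterate_derivative_of_natDegree_le {R : Type*} [Semiring R]
    {P p : R[X]} {k n : ℕ} (hP : P.natDegree ≤ k) (hp : p.natDegree ≤ n) :
    (P * derivative^[k] p).coeff n = P.coeff k * n.descFactorial k * p.coeff n := by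
  rcases le_or_gt k n with hkn | hnk
  · obtain ⟨m, rfl⟩ := Nat.exists_eq_add_of_le hkn
    have hder : (derivative^[k] p).natDegree ≤ m :=
      (natDegree_iterate_derivative p k).trans (by omega)
    rw [coeff_mul_add_eq_of_natDegree_le hP hder, coeff_iterate_derivative, add_comm m k,
      nsmul_eq_mul, mul_assoc]
  · rw [iterate_derivative_eq_zero (hp.trans_lt hnk), Nat.descFactorial_eq_zero_iff_lt.mpr hnk]
    simp

theorem even_lame_leading_coefficient_general
    (g₂ g₃ c₀ c₁ : ℝ) (n : ℕ)
    (A : Polynomial ℝ) (hA : A.Monic) (hdeg : A.natDegree = n)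
    (h : (4 * X ^ 3 - Polynomial.C g₂ * X - Polynomial.C g₃)
          * derivative (derivative (derivative A))
        + (18 * X ^ 2 - Polynomial.C (3 / 2 * g₂)) * derivative (derivative A)
        + 4 * (3 * X + (Polynomial.C c₁ * X + Polynomial.C c₀)) * derivative A
        + 2 * A * derivative (Polynomial.C c₁ * X + Polynomial.C c₀) = 0) :
    c₁ = -((n : ℝ) * (n + 1)) := by
  have hlead : A.coeff n = 1 := hdeg ▸ hA.coeff_natDegree
  have hA : A.natDegree ≤ n := hdeg.le
  have graded : (4 * X ^ 3 - C g₂ * X - C g₃) * derivative^[3] A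
        + (18 * X ^ 2 - C (3 / 2 * g₂)) * derivative^[2] A
        + 4 * (3 * X + (C c₁ * X + C c₀)) * derivative^[1] A
        + C (2 * c₁) * derivative^[0] A = 0 := by
    rw [← h]
    simp only [Function.iterate_succ, Function.iterate_zero, Function.comp_apply, id,
      derivative_add, derivative_mul, derivative_C, derivative_X, map_mul, map_ofNat]
    ring
  have top := congrArg (coeff · n) graded
  simp only [coeff_add, coeff_zero] at top
  rw [coeff_mul_iterate_derivative_of_natDegree_le (by compute_degree) hA,
    coeff_mul_iterate_derivative_of_natDegree_le (by compute_degree) hA,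
    coeff_mul_iterate_derivative_of_natDegree_le (by compute_degree) hA,
    coeff_mul_iterate_derivative_of_natDegree_le (by compute_degree) hA, hlead] at top
  simp only [← descPochhammer_eval_eq_descFactorial, descPochhammer_succ_eval,
    descPochhammer_zero, eval_one] at top
  norm_num [coeff_X, coeff_C] at top
  have factored : (2 * (n : ℝ) + 1) * (c₁ + n * (n + 1)) = 0 := by
    linear_combination top / 2
  have hodd : 2 * (n : ℝ) + 1 ≠ 0 := by positivity
  linear_combination (mul_eq_zero.mp factored).resolve_left hodd

/-- In the even Lamé case with `C = c₁X + c₀` and `A` monic of degree `n ≥ 1`, the symmetry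
identity `(4X³ − g₂X − g₃)A''' + (18X² − (3/2)g₂)A'' + 4(3X + C)A' + 2AC' = 0` forces
`c₁ = −n(n+1)`. -/
theorem even_lame_leading_coefficient
    (g₂ g₃ c₀ c₁ : ℝ) (n : ℕ) (hn : 1 ≤ n)
    (A : Polynomial ℝ) (hA : A.Monic) (hdeg : A.natDegree = n)
    (h : (4 * X ^ 3 - Polynomial.C g₂ * X - Polynomial.C g₃)
          * derivative (derivative (derivative A))
        + (18 * X ^ 2 - Polynomial.C (3 / 2 * g₂)) * derivative (derivative A)
        + 4 * (3 * X + (Polynomial.C c₁ * X + Polynomial.C c₀)) * derivative A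
        + 2 * A * derivative (Polynomial.C c₁ * X + Polynomial.C c₀) = 0) :
    c₁ = -((n : ℝ) * (n + 1)) :=
  even_lame_leading_coefficient_general g₂ g₃ c₀ c₁ n A hA hdeg h
end

section
/- Let g₂, g₃, c₀ ∈ ℝ, let n ≥ 3 be a natural number, set C := −n(n+1)·X + c₀, and let A = Σ_{i=0}^{n} a_i X^i ∈ ℝ[X] be monic of degree n (a_n = 1) satisfying the even-case Lamé symmetry identity (4X³ − g₂X − g₃)·A''' + (18X² − (3/2)g₂)·A'' + 4(3X + C)·A' + 2A·C' = 0 in ℝ[X]. Then the coefficients of A are given by: a_{n−1} = c₀/(2n−1), a_{n−2} = (8c₀² − n·g₂·(2n−1)²)·(n−1) / (8(2n−3)(2n−1)²), and for every i with 0 ≤ i ≤ n−3, a_i = ((2i²+10i+12)·a_{i+3}·g₃ + (2i²+7i+6)·a_{i+2}·g₂ − 8c₀·a_{i+1})·(i+1) / (4(i+n+1)(2i+1)(i−n)), where a_{n+1} and a_{n+2} are interpreted as 0 when they occur. -/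
/-!
Comparing coefficients of `X^k` turns the symmetry identity into a recurrence. The terms
`4X³A''' + 18X²A'' + 4(3 + c₁)XA' + 2c₁A` of the operator are polynomials in the Euler
operator `X·d/dX` and multiply `X^k` by `2(2k+1)(k(k+1) + c₁)`; every other term lowers the
degree by one, two or three. For `c₁ = -n(n+1)` the diagonal factor is `2(2k+1)(k-n)(k+n+1)`,
nonzero for `k < n`, so each `a_k` with `k < n` is determined by `a_{k+1}, a_{k+2}, a_{k+3}`,
starting from `a_n = 1`.
-/

open Polynomial

section EulerOperator

variable {R : Type*} [CommRing R] (p : R[X]) (k : ℕ)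

theorem coeff_X_mul_derivative : (X * derivative p).coeff k = p.coeff k * k := by
  cases k with
  | zero => simp
  | succ k => simp [coeff_derivative]

theorem coeff_X_sq_mul_derivative_derivative :
    (X ^ 2 * derivative (derivative p)).coeff k = p.coeff k * (k * (k - 1)) := by
  have euler : X ^ 2 * derivative (derivative p)
      = X * derivative (X * derivative p) - X * derivative p := by
    simp only [derivative_mul, derivative_X]; ring
  rw [euler, coeff_sub, coeff_X_mul_derivative, coeff_X_mul_derivative]
  ring

theorem coeff_X_pow_three_mul_derivative_derivative_derivative :
    (X ^ 3 * derivative (derivative (derivative p))).coeff k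
      = p.coeff k * (k * (k - 1) * (k - 2)) := by
  have euler : X ^ 3 * derivative (derivative (derivative p))
      = X * derivative (X ^ 2 * derivative (derivative p))
        - 2 * (X ^ 2 * derivative (derivative p)) := by
    simp only [derivative_mul, derivative_X_pow, Nat.cast_ofNat, map_ofNat]; ring
  rw [euler, coeff_sub, coeff_X_mul_derivative, coeff_ofNat_mul,
    coeff_X_sq_mul_derivative_derivative]
  ring

end EulerOperator

/-- `W` is the potential polynomial, called `C` in the paper. -/
noncomputable def lameOperator (g₂ g₃ : ℝ) (W A : ℝ[X]) : ℝ[X] :=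
  (4 * X ^ 3 - C g₂ * X - C g₃) * derivative (derivative (derivative A))
    + (18 * X ^ 2 - C (3 / 2 * g₂)) * derivative (derivative A)
    + 4 * (3 * X + W) * derivative A + 2 * A * derivative W

theorem coeff_lameOperator_linear (g₂ g₃ c₁ c₀ : ℝ) (A : ℝ[X]) (k : ℕ) :
    (lameOperator g₂ g₃ (C c₁ * X + C c₀) A).coeff k
      = 2 * (2 * k + 1) * (k * (k + 1) + c₁) * A.coeff k
        + 4 * c₀ * (k + 1) * A.coeff (k + 1)
        - g₂ / 2 * (k + 1) * (k + 2) * (2 * k + 3) * A.coeff (k + 2)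
        - g₃ * (k + 1) * (k + 2) * (k + 3) * A.coeff (k + 3) := by
  have expand : lameOperator g₂ g₃ (C c₁ * X + C c₀) A
      = C 4 * (X ^ 3 * derivative (derivative (derivative A)))
        - C g₂ * (X * derivative (derivative (derivative A)))
        - C g₃ * derivative (derivative (derivative A))
        + C 18 * (X ^ 2 * derivative (derivative A))
        - C (3 / 2 * g₂) * derivative (derivative A)
        + C (12 + 4 * c₁) * (X * derivative A)
        + C (4 * c₀) * derivative A
        + C (2 * c₁) * A := by
    simp only [lameOperator, derivative_C_mul_X, derivative_C, add_zero, map_add,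
      map_mul, map_ofNat]
    ring
  rw [expand]
  simp only [coeff_add, coeff_sub, coeff_C_mul,
    coeff_X_pow_three_mul_derivative_derivative_derivative, coeff_X_sq_mul_derivative_derivative,
    coeff_X_mul_derivative, coeff_derivative]
  push_cast
  ring

theorem coeff_eq_of_lameOperator_eq_zero {g₂ g₃ c₀ : ℝ} {n : ℕ} {A : ℝ[X]}
    (h : lameOperator g₂ g₃ (C (-((n : ℝ) * (n + 1))) * X + C c₀) A = 0)
    {i : ℕ} (hi : i < n) :
    A.coeff i = ((2 * (i : ℝ) ^ 2 + 10 * (i : ℝ) + 12) * A.coeff (i + 3) * g₃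
          + (2 * (i : ℝ) ^ 2 + 7 * (i : ℝ) + 6) * A.coeff (i + 2) * g₂
          - 8 * c₀ * A.coeff (i + 1)) * ((i : ℝ) + 1)
        / (4 * ((i : ℝ) + (n : ℝ) + 1) * (2 * (i : ℝ) + 1) * ((i : ℝ) - (n : ℝ))) := by
  have recurrence := coeff_lameOperator_linear g₂ g₃ (-((n : ℝ) * (n + 1))) c₀ A i
  rw [h, coeff_zero] at recurrence
  have hin : (i : ℝ) < n := by exact_mod_cast hi
  rw [eq_div_iff (by
    have : (i : ℝ) - n ≠ 0 := by linarith
    positivity)]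
  linear_combination -2 * recurrence

/-- In the even Lamé case with `C = −n(n+1)X + c₀` and `A` monic of degree `n ≥ 3`
satisfying the symmetry identity, the coefficients of `A` are determined recursively:
`a_{n−1} = c₀/(2n−1)`, `a_{n−2} = (8c₀² − n·g₂·(2n−1)²)(n−1)/(8(2n−3)(2n−1)²)`, and for
`0 ≤ i ≤ n−3`,
`a_i = ((2i²+10i+12)a_{i+3}g₃ + (2i²+7i+6)a_{i+2}g₂ − 8c₀a_{i+1})(i+1)/(4(i+n+1)(2i+1)(i−n))`.
(Coefficients above degree `n` vanish, so `a_{n+1} = a_{n+2} = 0` automatically.) -/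
theorem even_lame_coefficients
    (g₂ g₃ c₀ : ℝ) (n : ℕ) (hn : 3 ≤ n)
    (A : Polynomial ℝ) (hA : A.Monic) (hdeg : A.natDegree = n)
    (h : (4 * X ^ 3 - Polynomial.C g₂ * X - Polynomial.C g₃)
          * derivative (derivative (derivative A))
        + (18 * X ^ 2 - Polynomial.C (3 / 2 * g₂)) * derivative (derivative A)
        + 4 * (3 * X + (Polynomial.C (-((n : ℝ) * (n + 1))) * X + Polynomial.C c₀))
            * derivative A
        + 2 * A * derivative (Polynomial.C (-((n : ℝ) * (n + 1))) * X + Polynomial.C c₀)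
        = 0) :
    A.coeff (n - 1) = c₀ / (2 * (n : ℝ) - 1) ∧
    A.coeff (n - 2) = (8 * c₀ ^ 2 - (n : ℝ) * g₂ * (2 * (n : ℝ) - 1) ^ 2) * ((n : ℝ) - 1)
        / (8 * (2 * (n : ℝ) - 3) * (2 * (n : ℝ) - 1) ^ 2) ∧
    ∀ i : ℕ, i ≤ n - 3 →
      A.coeff i = ((2 * (i : ℝ) ^ 2 + 10 * (i : ℝ) + 12) * A.coeff (i + 3) * g₃
            + (2 * (i : ℝ) ^ 2 + 7 * (i : ℝ) + 6) * A.coeff (i + 2) * g₂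
            - 8 * c₀ * A.coeff (i + 1)) * ((i : ℝ) + 1)
          / (4 * ((i : ℝ) + (n : ℝ) + 1) * (2 * (i : ℝ) + 1) * ((i : ℝ) - (n : ℝ))) := by
  have hcoeff := fun i ↦ coeff_eq_of_lameOperator_eq_zero (i := i) h
  obtain ⟨m, rfl⟩ : ∃ m, n = m + 3 := ⟨n - 3, by omega⟩
  have hlead : A.coeff (m + 3) = 1 := hdeg ▸ hA.coeff_natDegree
  have hvanish₁ : A.coeff (m + 4) = 0 := coeff_eq_zero_of_natDegree_lt (by omega)
  have hvanish₂ : A.coeff (m + 5) = 0 := coeff_eq_zero_of_natDegree_lt (by omega)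
  have hm : (0 : ℝ) ≤ m := m.cast_nonneg
  have hm₁ : 2 * (m + 3 : ℝ) - 1 ≠ 0 := by linarith
  have hm₃ : 2 * (m + 3 : ℝ) - 3 ≠ 0 := by linarith
  have hsublead : A.coeff (m + 2) = c₀ / (2 * ((m + 3 : ℕ) : ℝ) - 1) := by
    rw [hcoeff (m + 2) (by omega), hlead, hvanish₁, hvanish₂]
    push_cast
    field_simp
    ring
  refine ⟨hsublead, ?_, fun i hi ↦ hcoeff i (by omega)⟩
  show A.coeff (m + 1) = _
  rw [hcoeff (m + 1) (by omega), hlead, hvanish₁, hsublead]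
  push_cast
  field_simp
  ring
end

section
/- (Lamé case, n = 2.) Let g₂, g₃, c₀ ∈ ℝ and let p : I → ℝ be a smooth function on an open interval I satisfying (p')² = 4p³ − g₂·p − g₃ and p'' = 6p² − g₂/2. Define w := −6p + c₀ and z := p² + (c₀/3)·p + c₀²/9 − g₂/4. Then z satisfies the Lie equation z''' + 4wz' + 2w'z = 0 on I, and the associated constant satisfies w·z² − (z')²/4 + z·z''/2 = (1/324)·(c₀² − 3g₂)·(4c₀³ − 9c₀g₂ − 27g₃) at every point of I. -/
/-- Lamé case `n = 2`: if `p` is smooth on an open interval with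
`(p')² = 4p³ − g₂p − g₃` and `p'' = 6p² − g₂/2`, then
`z = p² + (c₀/3)p + c₀²/9 − g₂/4` is a symmetry of `w = −6p + c₀`, and the associated
constant equals `(1/324)(c₀² − 3g₂)(4c₀³ − 9c₀g₂ − 27g₃)`. -/
theorem lame_n_two
    (g₂ g₃ c₀ a b : ℝ) (p : ℝ → ℝ)
    (hp : ContDiffOn ℝ (⊤ : ℕ∞) p (Set.Ioo a b))
    (hp1 : ∀ x ∈ Set.Ioo a b, (deriv p x) ^ 2 = 4 * p x ^ 3 - g₂ * p x - g₃)
    (hp2 : ∀ x ∈ Set.Ioo a b, deriv (deriv p) x = 6 * p x ^ 2 - g₂ / 2) :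
    (∀ x ∈ Set.Ioo a b,
      deriv (deriv (deriv (fun t => p t ^ 2 + c₀ / 3 * p t + c₀ ^ 2 / 9 - g₂ / 4))) x
        + 4 * (-6 * p x + c₀)
            * deriv (fun t => p t ^ 2 + c₀ / 3 * p t + c₀ ^ 2 / 9 - g₂ / 4) x
        + 2 * deriv (fun t => -6 * p t + c₀) x
            * (p x ^ 2 + c₀ / 3 * p x + c₀ ^ 2 / 9 - g₂ / 4) = 0) ∧
    (∀ x ∈ Set.Ioo a b,
      (-6 * p x + c₀) * (p x ^ 2 + c₀ / 3 * p x + c₀ ^ 2 / 9 - g₂ / 4) ^ 2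
        - (deriv (fun t => p t ^ 2 + c₀ / 3 * p t + c₀ ^ 2 / 9 - g₂ / 4) x) ^ 2 / 4
        + (p x ^ 2 + c₀ / 3 * p x + c₀ ^ 2 / 9 - g₂ / 4)
            * deriv (deriv (fun t => p t ^ 2 + c₀ / 3 * p t + c₀ ^ 2 / 9 - g₂ / 4)) x / 2
        = 1 / 324 * (c₀ ^ 2 - 3 * g₂) * (4 * c₀ ^ 3 - 9 * c₀ * g₂ - 27 * g₃)) := by
  have hop : IsOpen (Set.Ioo a b) := isOpen_Ioo
  have hp' : ContDiffOn ℝ (⊤ : ℕ∞) (deriv p) (Set.Ioo a b) := hp.deriv_of_isOpen hop (by simp)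
  have hdp : ∀ x ∈ Set.Ioo a b, HasDerivAt p (deriv p x) x := fun x hx =>
    ((hp.differentiableOn (by simp)).differentiableAt (hop.mem_nhds hx)).hasDerivAt
  have hdp' : ∀ x ∈ Set.Ioo a b, HasDerivAt (deriv p) (deriv (deriv p) x) x := fun x hx =>
    ((hp'.differentiableOn (by simp)).differentiableAt (hop.mem_nhds hx)).hasDerivAt
  set z : ℝ → ℝ := fun t => p t ^ 2 + c₀ / 3 * p t + c₀ ^ 2 / 9 - g₂ / 4 with hzdef
  -- first derivative of z
  have hz1 : ∀ x ∈ Set.Ioo a b,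
      HasDerivAt z (2 * (p x * deriv p x) + c₀ / 3 * deriv p x) x := by
    intro x hx
    have h := ((((hdp x hx).pow 2).add ((hdp x hx).const_mul (c₀ / 3))).add_const
      (c₀ ^ 2 / 9)).sub_const (g₂ / 4)
    exact h.congr_deriv (by ring)
  have hDz : ∀ x ∈ Set.Ioo a b,
      deriv z x = 2 * (p x * deriv p x) + c₀ / 3 * deriv p x := fun x hx => (hz1 x hx).deriv
  -- second derivative of z
  have hDDz : ∀ x ∈ Set.Ioo a b,
      deriv (deriv z) x
        = 20 * p x ^ 3 + 2 * c₀ * p x ^ 2 - 3 * g₂ * p x - 2 * g₃ - c₀ * g₂ / 6 := by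
    intro x hx
    have he : deriv z =ᶠ[nhds x]
        (fun t => 2 * (p t * deriv p t) + c₀ / 3 * deriv p t) :=
      Filter.eventuallyEq_of_mem (hop.mem_nhds hx) (fun y hy => hDz y hy)
    rw [he.deriv_eq]
    have h := (((hdp x hx).mul (hdp' x hx)).const_mul 2).add
      ((hdp' x hx).const_mul (c₀ / 3))
    rw [(show HasDerivAt (fun t => 2 * (p t * deriv p t) + c₀ / 3 * deriv p t) _ x from h).deriv]
    linear_combination 2 * hp1 x hx + (2 * p x + c₀ / 3) * hp2 x hx
  -- third derivative of z
  have hDDDz : ∀ x ∈ Set.Ioo a b,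
      deriv (deriv (deriv z)) x
        = (60 * p x ^ 2 + 4 * c₀ * p x - 3 * g₂) * deriv p x := by
    intro x hx
    have he : deriv (deriv z) =ᶠ[nhds x]
        (fun t => 20 * p t ^ 3 + 2 * c₀ * p t ^ 2 - 3 * g₂ * p t - 2 * g₃ - c₀ * g₂ / 6) :=
      Filter.eventuallyEq_of_mem (hop.mem_nhds hx) (fun y hy => hDDz y hy)
    rw [he.deriv_eq]
    have h : HasDerivAt
        (fun t => 20 * p t ^ 3 + 2 * c₀ * p t ^ 2 - 3 * g₂ * p t - 2 * g₃ - c₀ * g₂ / 6)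
        ((60 * p x ^ 2 + 4 * c₀ * p x - 3 * g₂) * deriv p x) x := by
      have h0 := (((((hdp x hx).pow 3).const_mul 20).add
        (((hdp x hx).pow 2).const_mul (2 * c₀))).sub
        ((hdp x hx).const_mul (3 * g₂))).sub_const (2 * g₃) |>.sub_const (c₀ * g₂ / 6)
      exact h0.congr_deriv (by ring)
    rw [h.deriv]
  -- derivative of w
  have hw : ∀ x ∈ Set.Ioo a b,
      deriv (fun t => -6 * p t + c₀) x = -6 * deriv p x := by
    intro x hx
    have h := ((hdp x hx).const_mul (-6)).add_const c₀
    rw [h.deriv]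
  constructor
  · intro x hx
    rw [hDDDz x hx, hDz x hx, hw x hx]
    ring
  · intro x hx
    rw [hDz x hx, hDDz x hx]
    linear_combination (-(2 * p x + c₀ / 3) ^ 2 / 4) * hp1 x hx
end

section
/- (Odd case, trivial invariants g₂ = g₃ = c₀ = 0.) Let n be a natural number, w₀ ∈ ℝ, and consider the interval x > −w₀. Define the potential w(x) := (−15/4 − n(n+4))·(x + w₀)^{−2}. Then: (i) the function z(x) := −2·(x + w₀)^{−2n−3} satisfies the Lie equation z''' + 4wz' + 2w'z = 0 on x > −w₀, with associated constant c_w = w·z² − (z')²/4 + z·z''/2 equal to 0 (parabolic case); and (ii) for any constants α₁, α₂ ∈ ℝ, the function y(x) := α₁·(x + w₀)^{−3/2−n} + α₂·(x + w₀)^{n+5/2} satisfies the Schrödinger equation y'' + w·y = 0 on x > −w₀. -/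
/-!
For the inverse-square potential `w = C/(x+a)²` both equations reduce, on power functions, to
algebra in the exponent. The function `(x+a)^p` solves `y'' + w y = 0` exactly when `p` is a
root of the indicial equation `p(p-1) + C = 0` of this Euler equation; here the roots are
`-3/2 - n` and `n + 5/2`. Feeding `z = c(x+a)^k` into the Lie equation or into `c_w` leaves a
multiple of `4C + k(k-2)`, which vanishes for `k = 2p`, i.e. for `z` a multiple of the square of
a solution; here `k = -2n-3`.
-/

open Filter Topology

lemma deriv_const_mul_add_zpow (a c : ℝ) (k : ℤ) :
    deriv (fun t : ℝ => c * (t + a) ^ k) = fun t => c * k * (t + a) ^ (k - 1) := by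
  funext x
  have hshift := deriv_comp_add_const (f := fun y : ℝ => y ^ k) (a := a) (x := x)
  simp only [deriv_const_mul_field', hshift, deriv_zpow, mul_assoc]

lemma deriv_const_mul_add_rpow (a c p : ℝ) :
    deriv (fun t : ℝ => c * (t + a) ^ p) = fun t => c * p * (t + a) ^ (p - 1) := by
  funext x
  have hshift := deriv_comp_add_const (f := fun y : ℝ => y ^ p) (a := a) (x := x)
  simp only [deriv_const_mul_field', hshift, Real.deriv_rpow_const, mul_assoc]

lemma differentiableAt_const_mul_add_rpow (a c p : ℝ) {x : ℝ} (hx : x + a ≠ 0) :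
    DifferentiableAt ℝ (fun t : ℝ => c * (t + a) ^ p) x :=
  ((differentiableAt_id.add_const a).rpow_const (Or.inl hx)).const_mul c

lemma deriv_deriv_sum_const_mul_add_rpow (a α β p q : ℝ) {x : ℝ} (hx : x + a ≠ 0) :
    deriv (deriv fun t : ℝ => α * (t + a) ^ p + β * (t + a) ^ q) x
      = α * p * (p - 1) * (x + a) ^ (p - 1 - 1) + β * q * (q - 1) * (x + a) ^ (q - 1 - 1) := by
  have hderiv : ∀ t : ℝ, t + a ≠ 0 → deriv (fun t : ℝ => α * (t + a) ^ p + β * (t + a) ^ q) t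
      = α * p * (t + a) ^ (p - 1) + β * q * (t + a) ^ (q - 1) := fun t ht => by
    rw [deriv_fun_add (differentiableAt_const_mul_add_rpow a α p ht)
      (differentiableAt_const_mul_add_rpow a β q ht), deriv_const_mul_add_rpow,
      deriv_const_mul_add_rpow]
  have hnear : deriv (fun t : ℝ => α * (t + a) ^ p + β * (t + a) ^ q)
      =ᶠ[𝓝 x] fun t => α * p * (t + a) ^ (p - 1) + β * q * (t + a) ^ (q - 1) :=
    ((continuous_add_const a).continuousAt.eventually_ne hx).mono hderiv
  rw [hnear.deriv_eq, deriv_fun_add (differentiableAt_const_mul_add_rpow a _ _ hx)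
      (differentiableAt_const_mul_add_rpow a _ _ hx), deriv_const_mul_add_rpow,
      deriv_const_mul_add_rpow]

lemma lie_equation_inverse_square_of_zpow {a C c : ℝ} {k : ℤ} (hk : 4 * C + k * (k - 2) = 0)
    {x : ℝ} (hx : x + a ≠ 0) :
    deriv (deriv (deriv (fun t : ℝ => c * (t + a) ^ k))) x
        + 4 * (C / (x + a) ^ 2) * deriv (fun t : ℝ => c * (t + a) ^ k) x
        + 2 * deriv (fun t : ℝ => C / (t + a) ^ 2) x * (c * (x + a) ^ k) = 0 := by
  have hw : (fun t : ℝ => C / (t + a) ^ 2) = fun t => C * (t + a) ^ (-2 : ℤ) := by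
    funext t; rw [zpow_neg, zpow_ofNat, div_eq_mul_inv]
  simp only [hw, deriv_const_mul_add_zpow]
  simp only [zpow_sub_one₀ hx, zpow_neg, zpow_ofNat]
  generalize x + a = u
  push_cast
  linear_combination (c * (k - 1) * u ^ k * u⁻¹ ^ 3) * hk

lemma lie_invariant_inverse_square_of_zpow {a C c : ℝ} {k : ℤ} (hk : 4 * C + k * (k - 2) = 0)
    {x : ℝ} (hx : x + a ≠ 0) :
    C / (x + a) ^ 2 * (c * (x + a) ^ k) ^ 2
        - (deriv (fun t : ℝ => c * (t + a) ^ k) x) ^ 2 / 4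
        + c * (x + a) ^ k * deriv (deriv (fun t : ℝ => c * (t + a) ^ k)) x / 2 = 0 := by
  simp only [deriv_const_mul_add_zpow, zpow_sub_one₀ hx]
  generalize x + a = u
  push_cast
  linear_combination (c ^ 2 * (u ^ k) ^ 2 * u⁻¹ ^ 2 / 4) * hk

lemma schrodinger_inverse_square_of_rpow {a C α β p q : ℝ} (hp : p * (p - 1) + C = 0)
    (hq : q * (q - 1) + C = 0) {x : ℝ} (hx : x + a ≠ 0) :
    deriv (deriv fun t : ℝ => α * (t + a) ^ p + β * (t + a) ^ q) x
      + C / (x + a) ^ 2 * (α * (x + a) ^ p + β * (x + a) ^ q) = 0 := by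
  rw [deriv_deriv_sum_const_mul_add_rpow a α β p q hx, Real.rpow_sub_one hx,
    Real.rpow_sub_one hx, Real.rpow_sub_one hx, Real.rpow_sub_one hx]
  generalize x + a = u
  linear_combination (α * u ^ p * u⁻¹ ^ 2) * hp + (β * u ^ q * u⁻¹ ^ 2) * hq

/-- Odd Lamé case with trivial invariants `g₂ = g₃ = c₀ = 0`: on `x > −w₀`, for the potential
`w(x) = (−15/4 − n(n+4))(x+w₀)⁻²`, (i) `z(x) = −2(x+w₀)^{−2n−3}` satisfies the Lie equation
with associated constant `c_w = w·z² − (z')²/4 + z·z''/2 = 0` (parabolic case), and (ii) every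
`y(x) = α₁(x+w₀)^{−3/2−n} + α₂(x+w₀)^{n+5/2}` satisfies the Schrödinger equation
`y'' + w·y = 0`. -/
theorem odd_lame_trivial_invariants
    (n : ℕ) (w₀ : ℝ) :
    (∀ x : ℝ, -w₀ < x →
      deriv (deriv (deriv (fun t : ℝ => -2 * (t + w₀) ^ (-(2 * (n : ℤ)) - 3)))) x
        + 4 * ((-15 / 4 - (n : ℝ) * (n + 4)) / (x + w₀) ^ 2)
            * deriv (fun t : ℝ => -2 * (t + w₀) ^ (-(2 * (n : ℤ)) - 3)) x
        + 2 * deriv (fun t : ℝ => (-15 / 4 - (n : ℝ) * (n + 4)) / (t + w₀) ^ 2) x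
            * (-2 * (x + w₀) ^ (-(2 * (n : ℤ)) - 3)) = 0) ∧
    (∀ x : ℝ, -w₀ < x →
      ((-15 / 4 - (n : ℝ) * (n + 4)) / (x + w₀) ^ 2)
          * (-2 * (x + w₀) ^ (-(2 * (n : ℤ)) - 3)) ^ 2
        - (deriv (fun t : ℝ => -2 * (t + w₀) ^ (-(2 * (n : ℤ)) - 3)) x) ^ 2 / 4
        + (-2 * (x + w₀) ^ (-(2 * (n : ℤ)) - 3))
            * deriv (deriv (fun t : ℝ => -2 * (t + w₀) ^ (-(2 * (n : ℤ)) - 3))) x / 2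
        = 0) ∧
    (∀ α₁ α₂ : ℝ, ∀ x : ℝ, -w₀ < x →
      deriv (deriv (fun t : ℝ =>
          α₁ * (t + w₀) ^ (-(3 / 2 : ℝ) - (n : ℝ)) + α₂ * (t + w₀) ^ ((n : ℝ) + 5 / 2))) x
        + ((-15 / 4 - (n : ℝ) * (n + 4)) / (x + w₀) ^ 2)
            * (α₁ * (x + w₀) ^ (-(3 / 2 : ℝ) - (n : ℝ))
              + α₂ * (x + w₀) ^ ((n : ℝ) + 5 / 2)) = 0) := by
  have hx₀ {x : ℝ} (hx : -w₀ < x) : x + w₀ ≠ 0 := by linarith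
  have hk : 4 * (-15 / 4 - (n : ℝ) * (n + 4))
      + ((-(2 * (n : ℤ)) - 3 : ℤ) : ℝ) * (((-(2 * (n : ℤ)) - 3 : ℤ) : ℝ) - 2) = 0 := by
    push_cast; ring
  refine ⟨fun x hx => ?_, fun x hx => ?_, fun α₁ α₂ x hx => ?_⟩
  · exact lie_equation_inverse_square_of_zpow hk (hx₀ hx)
  · exact lie_invariant_inverse_square_of_zpow hk (hx₀ hx)
  · exact schrodinger_inverse_square_of_rpow (by ring) (by ring) (hx₀ hx)
end
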